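/- Let Ω ⊂ ℝ^N be open and bounded, q ∈ L^∞(Ω; ℝ^N), and s ∈ (0,1). Let u ∈ C²(Ω) ∩ C(ℝ^N) ∩ L¹_s(ℝ^N) satisfy -Δu + (-Δ)^s u + q·∇u ≥ 0 in Ω and u ≥ 0 on ℝ^N \ Ω. Then either u > 0 in Ω or u ≡ 0 on ℝ^N. -/

import Mathlib

noncomputable section
open MeasureTheory

/-- The normalizing constant `C_{N,s}` of the fractional Laplacian. -/
def fracC (N : ℕ) (s : ℝ) : ℝ :=
  Real.pi ^ (-(N : ℝ) / 2) * 2 ^ (2 * s) * s *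
    Real.Gamma ((N : ℝ) / 2 + s) / Real.Gamma (1 - s)

/-- The fractional Laplacian `(-Δ)^s` in second-difference form (equal to the
principal-value form `C_{N,s} P.V. ∫ (u(x)-u(y))|x-y|^{-N-2s} dy`). -/
def fracLap (N : ℕ) (s : ℝ) (u : EuclideanSpace ℝ (Fin N) → ℝ)
    (x : EuclideanSpace ℝ (Fin N)) : ℝ :=
  (fracC N s / 2) *
    ∫ y : EuclideanSpace ℝ (Fin N),
      (2 * u x - u (x + y) - u (x - y)) / ‖y‖ ^ ((N : ℝ) + 2 * s)

/-- The Laplacian `Δu(x) = ∑ᵢ ∂²u/∂xᵢ²(x)`. -/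
def lap (N : ℕ) (u : EuclideanSpace ℝ (Fin N) → ℝ)
    (x : EuclideanSpace ℝ (Fin N)) : ℝ :=
  ∑ i : Fin N,
    fderiv ℝ (fun z => fderiv ℝ u z (EuclideanSpace.single i (1:ℝ))) x
      (EuclideanSpace.single i (1:ℝ))

/-!
Suppose `u ≤ 0` somewhere in `Ω`. Since `u ≥ 0` off the bounded set `Ω`, `u` attains a nonpositive
global minimum at some `x₀ ∈ Ω`. There `∇u(x₀) = 0` and `Δu(x₀) ≥ 0`, so the inequality forces
`(-Δ)^s u(x₀) ≥ 0`. On the other hand `(-Δ)^s u(x₀)` is minus a weighted integral of the second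
differences `u(x₀ + y) + u(x₀ - y) - 2 u(x₀) ≥ 0`; the integral converges absolutely because these
differences are `O(|y|²)` near `0` (`u` is `C²` near `x₀`) and `u ∈ L¹_s` controls them at infinity.
Hence the second differences vanish identically, `u ≡ u(x₀)`, and evaluating at a point outside `Ω`
gives `u(x₀) ≥ 0`, i.e. `u ≡ 0`.
-/

open MeasureTheory Metric Set Filter Topology Module
open scoped NNReal

theorem IsLocalMin.deriv_deriv_nonneg {f : ℝ → ℝ} {a : ℝ} (hmin : IsLocalMin f a)
    (hc : ContinuousAt f a) : 0 ≤ deriv (deriv f) a := by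
  by_contra! hneg
  have hmax := isLocalMax_of_deriv_deriv_neg hneg hmin.deriv_eq_zero hc
  have hconst : f =ᶠ[𝓝 a] fun _ => f a :=
    (hmin.and hmax).mono fun t ht => le_antisymm ht.2 ht.1
  have h0 : deriv (deriv f) a = 0 := by simpa using hconst.deriv.deriv_eq
  exact hneg.ne h0

section Calculus

variable {E : Type*} [NormedAddCommGroup E] [NormedSpace ℝ E] {u : E → ℝ} {x : E}

theorem IsLocalMin.fderiv_fderiv_apply_self_nonneg (hmin : IsLocalMin u x)
    (hu : ContDiffAt ℝ 2 u x) (v : E) : 0 ≤ fderiv ℝ (fun z => fderiv ℝ u z v) x v := by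
  set γ : ℝ → E := fun t => x + t • v
  have hγ : ∀ t, HasDerivAt γ v t := fun t =>
    (((hasDerivAt_id t).smul_const v).const_add x).congr_deriv (one_smul ℝ v)
  have hγ0 : γ 0 = x := by simp [γ]
  have hderiv : deriv (u ∘ γ) =ᶠ[𝓝 0] fun t => fderiv ℝ u (γ t) v := by
    have hev : ∀ᶠ z in 𝓝 x, ContDiffAt ℝ 2 u z := hu.eventually (by simp)
    have hγx : Tendsto γ (𝓝 0) (𝓝 x) := hγ0 ▸ (hγ 0).continuousAt.tendsto
    filter_upwards [hγx.eventually hev] with t ht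
    exact ((ht.differentiableAt (by norm_num)).hasFDerivAt.comp_hasDerivAt t (hγ t)).deriv
  have hderiv2 : HasDerivAt (fun t => fderiv ℝ u (γ t) v)
      (fderiv ℝ (fun z => fderiv ℝ u z v) x v) 0 := by
    have hφ : DifferentiableAt ℝ (fun z => fderiv ℝ u z v) x :=
      ((hu.fderiv_right (m := 1) (by norm_num)).differentiableAt (by norm_num)).clm_apply
        (differentiableAt_const v)
    exact hφ.hasFDerivAt.comp_hasDerivAt_of_eq 0 (hγ 0) hγ0.symm
  have hmin' : IsLocalMin (u ∘ γ) 0 :=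
    IsLocalMin.comp_continuous (hγ0 ▸ hmin) (hγ 0).continuousAt
  have hc : ContinuousAt (u ∘ γ) 0 :=
    (hγ0 ▸ hu.continuousAt).comp (hγ 0).continuousAt
  simpa [hderiv.deriv_eq, hderiv2.deriv] using hmin'.deriv_deriv_nonneg hc

end Calculus

theorem IsLocalMin.lap_nonneg {N : ℕ} {u : EuclideanSpace ℝ (Fin N) → ℝ}
    {x : EuclideanSpace ℝ (Fin N)} (hmin : IsLocalMin u x) (hu : ContDiffAt ℝ 2 u x) :
    0 ≤ lap N u x :=
  Finset.sum_nonneg fun _ _ => hmin.fderiv_fderiv_apply_self_nonneg hu _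

section SecondDiff

variable {E : Type*} [NormedAddCommGroup E] {u : E → ℝ} {x : E}

def secondDiff (u : E → ℝ) (x y : E) : ℝ := u (x + y) + u (x - y) - 2 * u x

theorem Continuous.secondDiff (hu : Continuous u) (x : E) : Continuous (secondDiff u x) := by
  unfold _root_.secondDiff; fun_prop

variable [NormedSpace ℝ E]

theorem abs_secondDiff_le_of_lipschitzOnWith {r : ℝ} {K : ℝ≥0}
    (hd : ∀ z ∈ ball x r, DifferentiableAt ℝ u z)
    (hK : LipschitzOnWith K (fderiv ℝ u) (ball x r)) {y : E} (hy : ‖y‖ < r) :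
    |secondDiff u x y| ≤ 2 * K * ‖y‖ ^ 2 := by
  have hball : ∀ z ∈ closedBall (0 : E) ‖y‖, x + z ∈ ball x r ∧ x - z ∈ ball x r := by
    intro z hz
    rw [mem_closedBall_zero_iff] at hz
    simp only [mem_ball, dist_self_add_left, dist_self_sub_left]
    exact ⟨hz.trans_lt hy, hz.trans_lt hy⟩
  have hderiv : ∀ z ∈ closedBall (0 : E) ‖y‖, HasFDerivWithinAt (fun z => u (x + z) + u (x - z))
      (fderiv ℝ u (x + z) - fderiv ℝ u (x - z)) (closedBall 0 ‖y‖) z := by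
    intro z hz
    have hplus := (hd _ (hball z hz).1).hasFDerivAt.comp z ((hasFDerivAt_id z).const_add x)
    have hminus := (hd _ (hball z hz).2).hasFDerivAt.comp z ((hasFDerivAt_id z).const_sub x)
    refine ((hplus.add hminus).congr_fderiv ?_).hasFDerivWithinAt
    ext w; simp [sub_eq_add_neg]
  have hbound : ∀ z ∈ closedBall (0 : E) ‖y‖,
      ‖fderiv ℝ u (x + z) - fderiv ℝ u (x - z)‖ ≤ 2 * K * ‖y‖ := by
    intro z hz
    calc ‖fderiv ℝ u (x + z) - fderiv ℝ u (x - z)‖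
        ≤ K * ‖(x + z) - (x - z)‖ := hK.norm_sub_le (hball z hz).1 (hball z hz).2
      _ = 2 * K * ‖z‖ := by
          rw [add_sub_sub_cancel, ← two_smul ℝ z, norm_smul, Real.norm_two]; ring
      _ ≤ 2 * K * ‖y‖ := by gcongr; simpa using hz
  have hmvt := (convex_closedBall (0 : E) ‖y‖).norm_image_sub_le_of_norm_hasFDerivWithin_le
    hderiv hbound (mem_closedBall_self (norm_nonneg y)) (mem_closedBall_zero_iff.mpr le_rfl)
  simp only [add_zero, sub_zero, Real.norm_eq_abs] at hmvt
  calc |secondDiff u x y| = |u (x + y) + u (x - y) - (u x + u x)| := by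
        rw [secondDiff, two_mul]
    _ ≤ 2 * K * ‖y‖ * ‖y‖ := hmvt
    _ = 2 * K * ‖y‖ ^ 2 := by ring

theorem ContDiffAt.exists_abs_secondDiff_le (hu : ContDiffAt ℝ 2 u x) :
    ∃ r > 0, ∃ C, ∀ y : E, ‖y‖ < r → |secondDiff u x y| ≤ C * ‖y‖ ^ 2 := by
  obtain ⟨K, t, ht, hK⟩ := (hu.fderiv_right (m := 1) (by norm_num)).exists_lipschitzOnWith
  have hd : ∀ᶠ z in 𝓝 x, DifferentiableAt ℝ u z :=
    (hu.eventually (by simp)).mono fun z hz => hz.differentiableAt (by norm_num)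
  obtain ⟨r, hr, hsub⟩ := Metric.mem_nhds_iff.mp (inter_mem ht hd)
  exact ⟨r, hr, 2 * K, fun y hy => abs_secondDiff_le_of_lipschitzOnWith
    (fun z hz => (hsub hz).2) (hK.mono fun z hz => (hsub hz).1) hy⟩

end SecondDiff

theorem one_add_norm_add_rpow_le {E : Type*} [NormedAddCommGroup E] {p r : ℝ} (hp : 0 ≤ p)
    (hr : 0 < r) (x : E) {y : E} (hy : r ≤ ‖y‖) :
    1 + ‖x + y‖ ^ p ≤ ((1 / r) ^ p + (‖x‖ / r + 1) ^ p) * ‖y‖ ^ p := by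
  have hone : 1 ≤ (1 / r * ‖y‖) ^ p :=
    Real.one_le_rpow (by rw [one_div, inv_mul_eq_div, le_div_iff₀ hr, one_mul]; exact hy) hp
  have hxy : ‖x + y‖ ≤ (‖x‖ / r + 1) * ‖y‖ := by
    have : ‖x‖ ≤ ‖x‖ / r * ‖y‖ := by
      rw [div_mul_eq_mul_div, le_div_iff₀ hr]; gcongr
    linarith [norm_add_le x y]
  rw [Real.mul_rpow (by positivity) (norm_nonneg y)] at hone
  have hxyp := Real.rpow_le_rpow (norm_nonneg _) hxy hp
  rw [Real.mul_rpow (by positivity) (norm_nonneg y)] at hxyp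
  linarith

theorem integrableOn_compl_ball_comp_add_div_rpow {E : Type*} [NormedAddCommGroup E]
    [MeasurableSpace E] [BorelSpace E] (μ : Measure E) [μ.IsAddLeftInvariant] {v : E → ℝ}
    (hv : Measurable v) {p r : ℝ} (hp : 0 ≤ p) (hr : 0 < r)
    (hvL : Integrable (fun y => |v y| / (1 + ‖y‖ ^ p)) μ) (x : E) :
    IntegrableOn (fun y => v (x + y) / ‖y‖ ^ p) (ball 0 r)ᶜ μ := by
  set K := (1 / r) ^ p + (‖x‖ / r + 1) ^ p
  have hdom := ((hvL.comp_add_left x).const_mul K).integrableOn (s := (ball (0 : E) r)ᶜ)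
  refine hdom.mono' ((hv.comp (measurable_const_add x)).div
    (measurable_norm.pow_const p)).aestronglyMeasurable ?_
  rw [ae_restrict_iff' measurableSet_ball.compl]
  refine .of_forall fun y hy => ?_
  have hry : r ≤ ‖y‖ := by simpa using hy
  have hny : 0 < ‖y‖ ^ p := by have := hr.trans_le hry; positivity
  calc ‖v (x + y) / ‖y‖ ^ p‖ = |v (x + y)| / ‖y‖ ^ p := by
        rw [Real.norm_eq_abs, abs_div, abs_of_pos hny]
    _ ≤ |v (x + y)| * K / (1 + ‖x + y‖ ^ p) := by
        rw [div_le_div_iff₀ hny (by positivity), mul_assoc]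
        exact mul_le_mul_of_nonneg_left (one_add_norm_add_rpow_le hp hr x hry) (abs_nonneg _)
    _ = K * (|v (x + y)| / (1 + ‖x + y‖ ^ p)) := by ring

section Integrability

variable {E : Type*} [NormedAddCommGroup E] [NormedSpace ℝ E] [FiniteDimensional ℝ E]
  [MeasurableSpace E] [BorelSpace E] (μ : Measure E) [μ.IsAddHaarMeasure]

theorem integrableOn_ball_norm_rpow [Nontrivial E] {a : ℝ} (ha : -(finrank ℝ E : ℝ) < a)
    (r : ℝ) : IntegrableOn (fun y : E => ‖y‖ ^ a) (ball 0 r) μ := by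
  refine (integrableOn_fun_norm_addHaar μ (f := fun t => t ^ a)).mpr ?_
  have hd : 1 ≤ finrank ℝ E := Module.finrank_pos
  have hint : IntegrableOn (fun t : ℝ => t ^ ((finrank ℝ E : ℝ) - 1 + a)) (Ioo 0 r) :=
    ((intervalIntegral.intervalIntegrable_rpow' (by linarith)).def'.mono_set
      (Ioo_subset_Ioc_self.trans Ioc_subset_uIoc))
  refine hint.congr_fun (fun t ht => ?_) measurableSet_Ioo
  rw [smul_eq_mul, ← Real.rpow_natCast, Nat.cast_sub hd, Nat.cast_one, ← Real.rpow_add ht.1]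

theorem integrableOn_compl_ball_norm_rpow {a : ℝ} (ha : a < -(finrank ℝ E : ℝ)) {r : ℝ}
    (hr : 0 < r) : IntegrableOn (fun y : E => ‖y‖ ^ a) (ball 0 r)ᶜ μ := by
  have hdom : Integrable (fun y : E => ((1 + r) / r) ^ (-a) * (1 + ‖y‖) ^ a) μ := by
    simpa using (integrable_one_add_norm (μ := μ) (r := -a) (by linarith)).const_mul _
  refine hdom.integrableOn.mono' (measurable_norm.pow_const a).aestronglyMeasurable ?_
  rw [ae_restrict_iff' measurableSet_ball.compl]
  refine .of_forall fun y hy => ?_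
  have hry : r ≤ ‖y‖ := by simpa using hy
  have hy0 : 0 < ‖y‖ := hr.trans_le hry
  have hc : 0 < (1 + r) / r := by positivity
  have hle : 1 + ‖y‖ ≤ (1 + r) / r * ‖y‖ := by
    rw [div_mul_eq_mul_div, le_div_iff₀ hr]; nlinarith
  calc ‖‖y‖ ^ a‖ = ((1 + r) / r) ^ (-a) * (((1 + r) / r) ^ a * ‖y‖ ^ a) := by
        rw [Real.norm_of_nonneg (by positivity), ← mul_assoc, ← Real.rpow_add hc,
          neg_add_cancel, Real.rpow_zero, one_mul]
    _ ≤ ((1 + r) / r) ^ (-a) * (1 + ‖y‖) ^ a := by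
        rw [← Real.mul_rpow hc.le hy0.le]
        refine mul_le_mul_of_nonneg_left (Real.rpow_le_rpow_of_nonpos (by positivity) hle ?_)
          (by positivity)
        linarith [(finrank ℝ E).cast_nonneg (α := ℝ)]

theorem integrableOn_ball_div_rpow_of_abs_le_mul_sq [Nontrivial E] {f : E → ℝ}
    (hf : AEStronglyMeasurable f μ) {p : ℝ} (hp : p < finrank ℝ E + 2) {r C : ℝ}
    (hfC : ∀ y : E, ‖y‖ < r → |f y| ≤ C * ‖y‖ ^ 2) :
    IntegrableOn (fun y => f y / ‖y‖ ^ p) (ball 0 r) μ := by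
  have hdom := (integrableOn_ball_norm_rpow μ (a := 2 - p) (by linarith) r).const_mul (|C|)
  refine hdom.mono' ?_ ?_
  · exact (hf.aemeasurable.div (measurable_norm.pow_const p).aemeasurable).aestronglyMeasurable
      |>.restrict
  rw [ae_restrict_iff' measurableSet_ball]
  refine .of_forall fun y hy => ?_
  rw [mem_ball_zero_iff] at hy
  rcases eq_or_ne y 0 with rfl | hy0
  · have : f 0 = 0 := by simpa using hfC 0 hy
    simp only [this, zero_div, norm_zero]
    positivity
  have hny : 0 < ‖y‖ := norm_pos_iff.mpr hy0
  calc ‖f y / ‖y‖ ^ p‖ = |f y| / ‖y‖ ^ p := by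
        rw [Real.norm_eq_abs, abs_div, abs_of_pos (Real.rpow_pos_of_pos hny p)]
    _ ≤ |C| * ‖y‖ ^ 2 / ‖y‖ ^ p := by
        gcongr; exact (hfC y hy).trans (by gcongr; exact le_abs_self C)
    _ = |C| * ‖y‖ ^ (2 - p) := by
        rw [Real.rpow_sub hny, ← Real.rpow_natCast, mul_div_assoc, Nat.cast_ofNat]

theorem integrable_secondDiff_div_rpow [Nontrivial E] {u : E → ℝ} {x : E} {p : ℝ}
    (hu : Continuous u) (hux : ContDiffAt ℝ 2 u x)
    (huL : Integrable (fun y => |u y| / (1 + ‖y‖ ^ p)) μ)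
    (hp₁ : (finrank ℝ E : ℝ) < p) (hp₂ : p < finrank ℝ E + 2) :
    Integrable (fun y => secondDiff u x y / ‖y‖ ^ p) μ := by
  obtain ⟨r, hr, C, hC⟩ := hux.exists_abs_secondDiff_le
  have hp : 0 ≤ p := (Nat.cast_nonneg _).trans hp₁.le
  have hball : IntegrableOn (fun y => secondDiff u x y / ‖y‖ ^ p) (ball 0 r) μ :=
    integrableOn_ball_div_rpow_of_abs_le_mul_sq μ
      (hu.secondDiff x).aestronglyMeasurable hp₂ hC
  have hcompl : IntegrableOn (fun y => secondDiff u x y / ‖y‖ ^ p) (ball 0 r)ᶜ μ := by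
    have hplus := integrableOn_compl_ball_comp_add_div_rpow μ hu.measurable hp hr huL x
    have hminus := integrableOn_compl_ball_comp_add_div_rpow μ (hu.comp continuous_neg).measurable
        hp hr (by simpa using huL.comp_neg) (-x)
    have hconst := (integrableOn_compl_ball_norm_rpow μ (a := -p) (by linarith) hr).const_mul
      (2 * u x)
    refine ((hplus.add hminus).sub hconst).congr_fun (fun y _ => ?_) measurableSet_ball.compl
    simp only [secondDiff, Pi.add_apply, Pi.sub_apply, Function.comp_apply, neg_add_eq_sub,
      neg_sub, Real.rpow_neg (norm_nonneg y)]
    ring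
  simpa using hball.union hcompl

end Integrability

section Vanishing

variable {E : Type*} [NormedAddCommGroup E] {u : E → ℝ} {x : E}

theorem secondDiff_nonneg_of_forall_le (hmin : ∀ z, u x ≤ u z) (y : E) :
    0 ≤ secondDiff u x y := by
  unfold secondDiff; linarith [hmin (x + y), hmin (x - y)]

theorem eq_of_secondDiff_eq_zero (hmin : ∀ z, u x ≤ u z) (h : secondDiff u x = 0) (z : E) :
    u z = u x := by
  have hz := congrFun h (z - x)
  simp only [secondDiff, add_sub_cancel, Pi.zero_apply] at hz
  linarith [hmin z, hmin (x - (z - x))]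

theorem secondDiff_eq_zero_of_integral_nonpos [MeasurableSpace E] [OpensMeasurableSpace E]
    (μ : Measure E) [μ.IsOpenPosMeasure] {p : ℝ} (hu : Continuous u) (hmin : ∀ z, u x ≤ u z)
    (hint : Integrable (fun y => secondDiff u x y / ‖y‖ ^ p) μ)
    (hle : ∫ y, secondDiff u x y / ‖y‖ ^ p ∂μ ≤ 0) : secondDiff u x = 0 := by
  have hnn : 0 ≤ fun y => secondDiff u x y / ‖y‖ ^ p := fun y =>
    div_nonneg (secondDiff_nonneg_of_forall_le hmin y) (by positivity)
  have hae := (integral_eq_zero_iff_of_nonneg hnn hint).mp (le_antisymm hle (integral_nonneg hnn))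
  refine (Continuous.ae_eq_iff_eq μ (hu.secondDiff x) continuous_const).mp
    (hae.mono fun y hy => ?_)
  rcases div_eq_zero_iff.mp hy with h | h
  · exact h
  · obtain rfl : y = 0 := norm_eq_zero.mp ((Real.rpow_eq_zero_iff_of_nonneg (norm_nonneg y)).mp h).1
    show secondDiff u x 0 = 0
    rw [secondDiff, add_zero, sub_zero]
    ring

end Vanishing

theorem fracC_pos {N : ℕ} {s : ℝ} (hs : s ∈ Ioo (0 : ℝ) 1) : 0 < fracC N s := by
  have hΓ₁ : 0 < Real.Gamma ((N : ℝ) / 2 + s) := Real.Gamma_pos_of_pos (by positivity [hs.1])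
  have hΓ₂ : 0 < Real.Gamma (1 - s) := Real.Gamma_pos_of_pos (by linarith [hs.2])
  have hs₀ := hs.1
  unfold fracC
  positivity

theorem fracLap_eq_neg_integral_secondDiff (N : ℕ) (s : ℝ) (u : EuclideanSpace ℝ (Fin N) → ℝ)
    (x : EuclideanSpace ℝ (Fin N)) :
    fracLap N s u x = -(fracC N s / 2 * ∫ y, secondDiff u x y / ‖y‖ ^ ((N : ℝ) + 2 * s)) := by
  rw [fracLap, ← mul_neg, ← integral_neg]
  congr 2 with y
  rw [secondDiff, ← neg_div]
  ring_nf

theorem Bornology.IsBounded.exists_mem_nonpos_forall_le {X : Type*} [PseudoMetricSpace X]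
    [ProperSpace X] {Ω : Set X} (hΩ : Bornology.IsBounded Ω) {u : X → ℝ} (hu : Continuous u)
    (hout : ∀ x ∉ Ω, 0 ≤ u x) {x₁ : X} (hx₁ : x₁ ∈ Ω) (hu₁ : u x₁ ≤ 0) :
    ∃ x₀ ∈ Ω, u x₀ ≤ 0 ∧ ∀ z, u x₀ ≤ u z := by
  obtain ⟨x₂, -, hx₂⟩ := hΩ.isCompact_closure.exists_isMinOn ⟨x₁, subset_closure hx₁⟩
    hu.continuousOn
  have hx₂₁ : u x₂ ≤ u x₁ := hx₂ (subset_closure hx₁)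
  have hmin : ∀ z, u x₂ ≤ u z := fun z => by
    by_cases hz : z ∈ closure Ω
    · exact hx₂ hz
    · linarith [hout z fun h => hz (subset_closure h)]
  by_cases hx₂Ω : x₂ ∈ Ω
  · exact ⟨x₂, hx₂Ω, hx₂₁.trans hu₁, hmin⟩
  · exact ⟨x₁, hx₁, hu₁, fun z => by linarith [hout x₂ hx₂Ω, hmin z]⟩

theorem strong_maximum_principle_general {N : ℕ} (hN : 0 < N)
    (Ω : Set (EuclideanSpace ℝ (Fin N))) (hΩo : IsOpen Ω)
    (hΩb : Bornology.IsBounded Ω)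
    (q : EuclideanSpace ℝ (Fin N) → EuclideanSpace ℝ (Fin N))
    (s : ℝ) (hs : s ∈ Set.Ioo (0:ℝ) 1)
    (u : EuclideanSpace ℝ (Fin N) → ℝ)
    (hu2 : ContDiffOn ℝ 2 u Ω) (huc : Continuous u)
    (huL1s : Integrable (fun y : EuclideanSpace ℝ (Fin N) =>
      |u y| / (1 + ‖y‖ ^ ((N : ℝ) + 2 * s))))
    (hL : ∀ x ∈ Ω,
      0 ≤ -(lap N u x) + fracLap N s u x + inner (𝕜 := ℝ) (q x) (gradient u x))
    (hout : ∀ x ∉ Ω, 0 ≤ u x) :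
    (∀ x ∈ Ω, 0 < u x) ∨ (∀ x, u x = 0) := by
  have : Nonempty (Fin N) := ⟨⟨0, hN⟩⟩
  refine or_iff_not_imp_left.mpr fun hpos => ?_
  obtain ⟨x₁, hx₁, hu₁⟩ : ∃ x₁ ∈ Ω, u x₁ ≤ 0 := by simpa using hpos
  obtain ⟨x₀, hx₀, hu₀, hmin⟩ := hΩb.exists_mem_nonpos_forall_le huc hout hx₁ hu₁
  have hu₀2 : ContDiffAt ℝ 2 u x₀ := hu2.contDiffAt (hΩo.mem_nhds hx₀)
  have hlocmin : IsLocalMin u x₀ := .of_forall hmin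
  have hfrac : 0 ≤ fracLap N s u x₀ := by
    have hLx₀ := hL x₀ hx₀
    simp only [gradient, hlocmin.fderiv_eq_zero, map_zero, inner_zero_right] at hLx₀
    linarith [hlocmin.lap_nonneg hu₀2]
  rw [fracLap_eq_neg_integral_secondDiff, neg_nonneg] at hfrac
  have hint := integrable_secondDiff_div_rpow volume huc hu₀2 huL1s
    (by rw [finrank_euclideanSpace_fin]; linarith [hs.1])
    (by rw [finrank_euclideanSpace_fin]; linarith [hs.2])
  have hconst := eq_of_secondDiff_eq_zero hmin <| secondDiff_eq_zero_of_integral_nonpos volume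
    huc hmin hint (nonpos_of_mul_nonpos_right hfrac (half_pos (fracC_pos hs)))
  obtain ⟨z, hz⟩ : ∃ z, z ∉ Ω := by
    by_contra! h
    exact NormedSpace.unbounded_univ ℝ _ (hΩb.subset fun z _ => h z)
  intro x
  linarith [hconst x, hconst z, hout z hz]

/-- Strong maximum principle for `L = -Δ + (-Δ)^s + q·∇`: if `Ω ⊂ ℝ^N` is open and
bounded, `q ∈ L^∞(Ω)`, `s ∈ (0,1)`, and `u ∈ C²(Ω) ∩ C(ℝ^N) ∩ L¹_s(ℝ^N)` satisfies
`Lu ≥ 0` in `Ω` and `u ≥ 0` on `ℝ^N \ Ω`, then `u > 0` in `Ω` or `u ≡ 0` on `ℝ^N`. -/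
theorem strong_maximum_principle {N : ℕ} (hN : 0 < N)
    (Ω : Set (EuclideanSpace ℝ (Fin N))) (hΩo : IsOpen Ω)
    (hΩb : Bornology.IsBounded Ω)
    (q : EuclideanSpace ℝ (Fin N) → EuclideanSpace ℝ (Fin N))
    (hq : ∃ M : ℝ, ∀ x ∈ Ω, ‖q x‖ ≤ M)
    (s : ℝ) (hs : s ∈ Set.Ioo (0:ℝ) 1)
    (u : EuclideanSpace ℝ (Fin N) → ℝ)
    (hu2 : ContDiffOn ℝ 2 u Ω) (huc : Continuous u)
    (huL1s : Integrable (fun y : EuclideanSpace ℝ (Fin N) =>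
      |u y| / (1 + ‖y‖ ^ ((N : ℝ) + 2 * s))))
    (hL : ∀ x ∈ Ω,
      0 ≤ -(lap N u x) + fracLap N s u x + inner (𝕜 := ℝ) (q x) (gradient u x))
    (hout : ∀ x ∉ Ω, 0 ≤ u x) :
    (∀ x ∈ Ω, 0 < u x) ∨ (∀ x, u x = 0) :=
  strong_maximum_principle_general hN Ω hΩo hΩb q s hs u hu2 huc huL1s hL hout
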